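/- Let δ = (r_b^max - μ_b)/σ_b - (r_c^max - μ_c)/σ_c, Δ = r* - r_c^max with Δ > 0, σ_b, σ_c > 0, r_c^max ≥ r_b^max, and suppose σ_c ≥ (1 - δσ_c/Δ)·σ_b. Then (r* - μ_b)/σ_b - (r* - μ_c)/σ_c ≥ 0, i.e., the z-score of the optimal reward r* under the candidate distribution is at most its z-score under the base distribution. -/

import Mathlib

/-!
Moving the reward from `r_c^max` up to `r*` raises the candidate z-score by `Δ / σ_c`, and moving
it from `r_b^max` up to `r*` raises the base z-score by `(Δ + (r_c^max - r_b^max)) / σ_b`. Cleared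
of denominators, the slow-convergence condition says exactly that the z-score drop `δ` dominates
`Δ / σ_c - Δ / σ_b`, and the extra `(r_c^max - r_b^max) / σ_b` is nonnegative.
-/

theorem div_sub_div_le_of_one_sub_mul_div_mul_le {K : Type*} [Field K] [LinearOrder K]
    [IsStrictOrderedRing K] {σb σc δ Δ : K} (hσb : 0 < σb) (hσc : 0 < σc) (hΔ : 0 < Δ)
    (h : (1 - δ * σc / Δ) * σb ≤ σc) : Δ / σc - Δ / σb ≤ δ := by
  have hcross : Δ * (σb - σc) ≤ δ * (σb * σc) := by
    have := mul_le_mul_of_nonneg_left h hΔ.le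
    field_simp at this
    linarith
  rw [div_sub_div _ _ hσc.ne' hσb.ne', div_le_iff₀ (by positivity)]
  linarith

/-- Key algebraic inequality in DISC's iteration-invariance lemma: with z-score drop `δ`,
optimality gap `Δ = r* - r_c^max > 0`, `r_c^max ≥ r_b^max`, and the slow-convergence condition
`σ_c ≥ (1 - δσ_c/Δ)σ_b`, the z-score of `r*` under the candidate is at most that under the base. -/
theorem disc_zscore_inequality
    (μb σb μc σc rbmax rcmax rstar δ Δ : ℝ)
    (hσb : 0 < σb) (hσc : 0 < σc)
    (hδ : δ = (rbmax - μb) / σb - (rcmax - μc) / σc)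
    (hΔ : Δ = rstar - rcmax) (hΔpos : 0 < Δ)
    (hmax : rbmax ≤ rcmax)
    (hslow : (1 - δ * σc / Δ) * σb ≤ σc) :
    0 ≤ (rstar - μb) / σb - (rstar - μc) / σc := by
  have hdrop : Δ / σc - Δ / σb ≤ δ :=
    div_sub_div_le_of_one_sub_mul_div_mul_le hσb hσc hΔpos hslow
  have hgap : 0 ≤ (rcmax - rbmax) / σb := div_nonneg (sub_nonneg.2 hmax) hσb.le
  have hsplit : (rstar - μb) / σb - (rstar - μc) / σc
      = (δ - (Δ / σc - Δ / σb)) + (rcmax - rbmax) / σb := by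
    subst hδ hΔ
    ring
  rw [hsplit]
  linarith
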